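/- arXiv:math/0212291 — 2 statements merged into one kernel-verified Lean document; each statement's English description precedes it below -/
import Mathlib

section
/- Let Ω and Ω̃ be open subsets of ℝ³ and let Φ : Ω → Ω̃ be a C² diffeomorphism with Jacobian matrix J(x) = DΦ(x). Let ε, μ : Ω̃ → M₃(ℝ) be matrix-valued functions and let E, H, D, B : Ω̃ × ℝ → ℝ³ be C¹ fields satisfying Maxwell's equations on Ω̃ × ℝ: curl_x E = −∂_t B, curl_x H = ∂_t D, div_x B = 0, div_x D = 0, together with the constitutive relations D(y,t) = ε(y)E(y,t) and B(y,t) = μ(y)H(y,t). Define on Ω × ℝ the transformed fields E'(x,t) = J(x)ᵀ E(Φ(x),t), H'(x,t) = J(x)ᵀ H(Φ(x),t), D'(x,t) = det J(x) · J(x)⁻¹ D(Φ(x),t), B'(x,t) = det J(x) · J(x)⁻¹ B(Φ(x),t), and the transformed material parameters ε'(x) = det J(x) · J(x)⁻¹ ε(Φ(x)) (J(x)⁻¹)ᵀ and μ'(x) = det J(x) · J(x)⁻¹ μ(Φ(x)) (J(x)⁻¹)ᵀ. Then on Ω × ℝ the transformed fields satisfy curl_x E' = −∂_t B', curl_x H'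 = ∂_t D', div_x B' = 0, div_x D' = 0, D' = ε'E', and B' = μ'H'. -/
/-- The partial derivative `∂ᵢ f(x)` of a scalar function on `ℝ³`. -/
noncomputable def pd (i : Fin 3) (f : (Fin 3 → ℝ) → ℝ) (x : Fin 3 → ℝ) : ℝ :=
  fderiv ℝ f x (Pi.single i 1)

/-- The curl of a vector field on (an open subset of) `ℝ³`. -/
noncomputable def curl3 (V : (Fin 3 → ℝ) → (Fin 3 → ℝ)) (x : Fin 3 → ℝ) : Fin 3 → ℝ :=
  ![pd 1 (fun y => V y 2) x - pd 2 (fun y => V y 1) x,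
    pd 2 (fun y => V y 0) x - pd 0 (fun y => V y 2) x,
    pd 0 (fun y => V y 1) x - pd 1 (fun y => V y 0) x]

/-- The divergence of a vector field on (an open subset of) `ℝ³`. -/
noncomputable def div3 (V : (Fin 3 → ℝ) → (Fin 3 → ℝ)) (x : Fin 3 → ℝ) : ℝ :=
  ∑ i : Fin 3, pd i (fun y => V y i) x

/-- The Jacobian matrix `J(x) = DΦ(x)`, with entries `J(x)ᵢⱼ = ∂ⱼΦᵢ(x)`. -/
noncomputable def Jmat (Φ : (Fin 3 → ℝ) → (Fin 3 → ℝ)) (x : Fin 3 → ℝ) :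
    Matrix (Fin 3) (Fin 3) ℝ :=
  Matrix.of fun i j => pd j (fun y => Φ y i) x

section Helpers

abbrev V3 := Fin 3 → ℝ

lemma vec_eq_sum (v : V3) : v = ∑ l, v l • (Pi.single l 1 : V3) := by
  funext j
  simp [Pi.single_apply, Finset.sum_apply]

lemma clm_eval {F : Type*} [NormedAddCommGroup F] [NormedSpace ℝ F]
    (L : V3 →L[ℝ] F) (v : V3) : L v = ∑ l, v l • L (Pi.single l 1) := by
  conv_lhs => rw [vec_eq_sum v]
  rw [map_sum]
  simp

lemma pd_congr {f g : V3 → ℝ} {x : V3} (h : f =ᶠ[nhds x] g) (i : Fin 3) :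
    pd i f x = pd i g x := by
  unfold pd; rw [h.fderiv_eq]

lemma pd_mul {f g : V3 → ℝ} {x : V3} (hf : DifferentiableAt ℝ f x)
    (hg : DifferentiableAt ℝ g x) (i : Fin 3) :
    pd i (fun z => f z * g z) x = pd i f x * g x + f x * pd i g x := by
  unfold pd
  rw [fderiv_fun_mul hf hg]
  simp [smul_eq_mul]
  ring

lemma pd_sub {f g : V3 → ℝ} {x : V3} (hf : DifferentiableAt ℝ f x)
    (hg : DifferentiableAt ℝ g x) (i : Fin 3) :
    pd i (fun z => f z - g z) x = pd i f x - pd i g x := by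
  unfold pd
  rw [fderiv_fun_sub hf hg]; simp

lemma pd_add {f g : V3 → ℝ} {x : V3} (hf : DifferentiableAt ℝ f x)
    (hg : DifferentiableAt ℝ g x) (i : Fin 3) :
    pd i (fun z => f z + g z) x = pd i f x + pd i g x := by
  unfold pd
  rw [fderiv_fun_add hf hg]; simp

lemma pd_quad {a b c d u : V3 → ℝ} {x : V3}
    (ha : DifferentiableAt ℝ a x) (hb : DifferentiableAt ℝ b x)
    (hc : DifferentiableAt ℝ c x) (hd : DifferentiableAt ℝ d x)
    (hu : DifferentiableAt ℝ u x) (i : Fin 3) :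
    pd i (fun z => (a z * b z - c z * d z) * u z) x =
      ((pd i a x * b x + a x * pd i b x) - (pd i c x * d x + c x * pd i d x)) * u x
      + (a x * b x - c x * d x) * pd i u x := by
  rw [pd_mul ((ha.fun_mul hb).fun_sub (hc.fun_mul hd)) hu, pd_sub (ha.fun_mul hb) (hc.fun_mul hd),
    pd_mul ha hb, pd_mul hc hd]

variable {Ω : Set V3} {Φ : V3 → V3} {x : V3}

lemma Jmat_eq_fderiv (hΦd : DifferentiableAt ℝ Φ x) (k i : Fin 3) :
    Jmat Φ x k i = fderiv ℝ Φ x (Pi.single i 1) k := by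
  have h : HasFDerivAt (fun y => Φ y k)
      ((ContinuousLinearMap.proj k).comp (fderiv ℝ Φ x)) x := by
    exact (ContinuousLinearMap.proj k).hasFDerivAt.comp x hΦd.hasFDerivAt
  simp [Jmat, pd, h.fderiv]

lemma comp_diff {f : V3 → ℝ} (hf : DifferentiableAt ℝ f (Φ x))
    (hΦd : DifferentiableAt ℝ Φ x) :
    DifferentiableAt ℝ (fun z => f (Φ z)) x :=
  hf.comp x hΦd

lemma pd_comp {f : V3 → ℝ} (hf : DifferentiableAt ℝ f (Φ x))
    (hΦd : DifferentiableAt ℝ Φ x) (j : Fin 3) :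
    pd j (fun z => f (Φ z)) x = ∑ l, pd l f (Φ x) * Jmat Φ x l j := by
  have h : HasFDerivAt (fun z => f (Φ z))
      ((fderiv ℝ f (Φ x)).comp (fderiv ℝ Φ x)) x := by
    exact hf.hasFDerivAt.comp x hΦd.hasFDerivAt
  rw [pd, h.fderiv]
  simp only [ContinuousLinearMap.coe_comp', Function.comp_apply]
  rw [clm_eval (fderiv ℝ f (Φ x)) (fderiv ℝ Φ x (Pi.single j 1))]
  refine Finset.sum_congr rfl fun l _ => ?_
  rw [Jmat_eq_fderiv hΦd, pd, smul_eq_mul, mul_comm]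

lemma diffOn_of_C2 (hΦ : ContDiffOn ℝ 2 Φ Ω) (hΩ : IsOpen Ω) {z : V3} (hz : z ∈ Ω) :
    DifferentiableAt ℝ Φ z :=
  ((hΦ.differentiableOn (by norm_num)).differentiableAt (hΩ.mem_nhds hz))

lemma Jmat_entry (hΩ : IsOpen Ω) (hΦ : ContDiffOn ℝ 2 Φ Ω) (hx : x ∈ Ω) (k i : Fin 3) :
    DifferentiableAt ℝ (fun z => Jmat Φ z k i) x ∧
    ∀ j, pd j (fun z => Jmat Φ z k i) x
        = fderiv ℝ (fderiv ℝ Φ) x (Pi.single j 1) (Pi.single i 1) k := by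
  have hG1 : ContDiffOn ℝ 1 (fderiv ℝ Φ) Ω := hΦ.fderiv_of_isOpen hΩ (by norm_num)
  have hGd : DifferentiableAt ℝ (fderiv ℝ Φ) x :=
    (hG1.differentiableOn one_ne_zero).differentiableAt (hΩ.mem_nhds hx)
  set A : (V3 →L[ℝ] V3) →L[ℝ] ℝ :=
    (ContinuousLinearMap.proj k).comp
      (ContinuousLinearMap.apply ℝ V3 ((Pi.single i 1 : V3))) with hA
  have heq : (fun z => Jmat Φ z k i) =ᶠ[nhds x] fun z => A (fderiv ℝ Φ z) := by
    filter_upwards [hΩ.mem_nhds hx] with z hz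
    simp [hA, Jmat_eq_fderiv (diffOn_of_C2 hΦ hΩ hz)]
  have hAd : HasFDerivAt (fun z => A (fderiv ℝ Φ z))
      (A.comp (fderiv ℝ (fderiv ℝ Φ) x)) x := by
    exact A.hasFDerivAt.comp x hGd.hasFDerivAt
  refine ⟨hAd.differentiableAt.congr_of_eventuallyEq heq, fun j => ?_⟩
  rw [pd_congr heq j, pd, hAd.fderiv]
  simp [hA]

lemma snd_symm (hΩ : IsOpen Ω) (hΦ : ContDiffOn ℝ 2 Φ Ω) (hx : x ∈ Ω) (v w : V3) :
    fderiv ℝ (fderiv ℝ Φ) x v w = fderiv ℝ (fderiv ℝ Φ) x w v :=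
  ((hΦ.contDiffAt (hΩ.mem_nhds hx)).isSymmSndFDerivAt (by norm_num)) v w

lemma pd_trisum {a0 a1 a2 b0 b1 b2 : V3 → ℝ} {x : V3}
    (ha0 : DifferentiableAt ℝ a0 x) (ha1 : DifferentiableAt ℝ a1 x)
    (ha2 : DifferentiableAt ℝ a2 x) (hb0 : DifferentiableAt ℝ b0 x)
    (hb1 : DifferentiableAt ℝ b1 x) (hb2 : DifferentiableAt ℝ b2 x) (i : Fin 3) :
    pd i (fun z => a0 z * b0 z + a1 z * b1 z + a2 z * b2 z) x =
      (pd i a0 x * b0 x + a0 x * pd i b0 x)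
      + (pd i a1 x * b1 x + a1 x * pd i b1 x)
      + (pd i a2 x * b2 x + a2 x * pd i b2 x) := by
  rw [pd_add ((ha0.fun_mul hb0).fun_add (ha1.fun_mul hb1)) (ha2.fun_mul hb2),
    pd_add (ha0.fun_mul hb0) (ha1.fun_mul hb1), pd_mul ha0 hb0, pd_mul ha1 hb1, pd_mul ha2 hb2]

lemma curl_pullback (hΩ : IsOpen Ω) (hΦ : ContDiffOn ℝ 2 Φ Ω) (hx : x ∈ Ω)
    (F : V3 → V3) (hF : DifferentiableAt ℝ F (Φ x)) :
    curl3 (fun z => (Jmat Φ z).transpose.mulVec (F (Φ z))) x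
      = (Jmat Φ x).adjugate.mulVec (curl3 F (Φ x)) := by
  have hΦdx : DifferentiableAt ℝ Φ x := diffOn_of_C2 hΦ hΩ hx
  have hJd : ∀ k i, DifferentiableAt ℝ (fun z => Jmat Φ z k i) x :=
    fun k i => (Jmat_entry hΩ hΦ hx k i).1
  have hJpd : ∀ k i j, pd j (fun z => Jmat Φ z k i) x
      = fderiv ℝ (fderiv ℝ Φ) x (Pi.single j 1) (Pi.single i 1) k :=
    fun k i => (Jmat_entry hΩ hΦ hx k i).2
  have hFk : ∀ k, DifferentiableAt ℝ (fun w => F w k) (Φ x) := fun k => by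
    exact (ContinuousLinearMap.proj k).differentiableAt.comp (Φ x) hF
  have hcd : ∀ k, DifferentiableAt ℝ (fun z => F (Φ z) k) x :=
    fun k => comp_diff (hFk k) hΦdx
  have hcpd : ∀ k j, pd j (fun z => F (Φ z) k) x
      = ∑ l, pd l (fun w => F w k) (Φ x) * Jmat Φ x l j :=
    fun k j => pd_comp (hFk k) hΦdx j
  have hVi : ∀ i : Fin 3, (fun z => (Jmat Φ z).transpose.mulVec (F (Φ z)) i)
      = fun z => Jmat Φ z 0 i * F (Φ z) 0 + Jmat Φ z 1 i * F (Φ z) 1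
        + Jmat Φ z 2 i * F (Φ z) 2 := by
    intro i; funext z
    simp [Matrix.mulVec, dotProduct, Fin.sum_univ_three]
  have hptA : ∀ i j : Fin 3,
      pd j (fun z => Jmat Φ z 0 i * F (Φ z) 0 + Jmat Φ z 1 i * F (Φ z) 1
        + Jmat Φ z 2 i * F (Φ z) 2) x =
      (pd j (fun z => Jmat Φ z 0 i) x * F (Φ x) 0 + Jmat Φ x 0 i * pd j (fun z => F (Φ z) 0) x)
      + (pd j (fun z => Jmat Φ z 1 i) x * F (Φ x) 1 + Jmat Φ x 1 i * pd j (fun z => F (Φ z) 1) x)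
      + (pd j (fun z => Jmat Φ z 2 i) x * F (Φ x) 2 + Jmat Φ x 2 i * pd j (fun z => F (Φ z) 2) x) :=
    fun i j => pd_trisum (hJd 0 i) (hJd 1 i) (hJd 2 i) (hcd 0) (hcd 1) (hcd 2) j
  have hs := snd_symm hΩ hΦ hx
  funext m
  simp only [curl3]
  fin_cases m <;>
  · simp only [Matrix.cons_val_zero, Matrix.cons_val_one, Matrix.head_cons,
      Matrix.cons_val_two, Matrix.tail_cons, Fin.isValue]
    simp only [hVi 0, hVi 1, hVi 2, hptA, hJpd, hcpd, Fin.sum_univ_three]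
    simp only [hs (Pi.single 1 1) (Pi.single 0 1), hs (Pi.single 2 1) (Pi.single 0 1),
      hs (Pi.single 2 1) (Pi.single 1 1)]
    simp [Matrix.adjugate_fin_three, Matrix.mulVec, dotProduct, curl3,
      Fin.sum_univ_three]
    ring

lemma adj3 (M : Matrix (Fin 3) (Fin 3) ℝ) (m n : Fin 3) :
    M.adjugate m n = M (n+1) (m+1) * M (n+2) (m+2) - M (n+1) (m+2) * M (n+2) (m+1) := by
  fin_cases m <;> fin_cases n <;>
    simp [Matrix.adjugate_fin_three] <;> ring

lemma pd_triquad {a0 b0 c0 d0 u0 a1 b1 c1 d1 u1 a2 b2 c2 d2 u2 : V3 → ℝ} {x : V3}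
    (ha0 : DifferentiableAt ℝ a0 x) (hb0 : DifferentiableAt ℝ b0 x)
    (hc0 : DifferentiableAt ℝ c0 x) (hd0 : DifferentiableAt ℝ d0 x)
    (hu0 : DifferentiableAt ℝ u0 x)
    (ha1 : DifferentiableAt ℝ a1 x) (hb1 : DifferentiableAt ℝ b1 x)
    (hc1 : DifferentiableAt ℝ c1 x) (hd1 : DifferentiableAt ℝ d1 x)
    (hu1 : DifferentiableAt ℝ u1 x)
    (ha2 : DifferentiableAt ℝ a2 x) (hb2 : DifferentiableAt ℝ b2 x)
    (hc2 : DifferentiableAt ℝ c2 x) (hd2 : DifferentiableAt ℝ d2 x)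
    (hu2 : DifferentiableAt ℝ u2 x) (i : Fin 3) :
    pd i (fun z => (a0 z * b0 z - c0 z * d0 z) * u0 z
        + (a1 z * b1 z - c1 z * d1 z) * u1 z
        + (a2 z * b2 z - c2 z * d2 z) * u2 z) x =
      (((pd i a0 x * b0 x + a0 x * pd i b0 x) - (pd i c0 x * d0 x + c0 x * pd i d0 x)) * u0 x
        + (a0 x * b0 x - c0 x * d0 x) * pd i u0 x)
      + (((pd i a1 x * b1 x + a1 x * pd i b1 x) - (pd i c1 x * d1 x + c1 x * pd i d1 x)) * u1 x
        + (a1 x * b1 x - c1 x * d1 x) * pd i u1 x)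
      + (((pd i a2 x * b2 x + a2 x * pd i b2 x) - (pd i c2 x * d2 x + c2 x * pd i d2 x)) * u2 x
        + (a2 x * b2 x - c2 x * d2 x) * pd i u2 x) := by
  rw [pd_add ((((ha0.fun_mul hb0).fun_sub (hc0.fun_mul hd0)).fun_mul hu0).fun_add
      (((ha1.fun_mul hb1).fun_sub (hc1.fun_mul hd1)).fun_mul hu1))
      (((ha2.fun_mul hb2).fun_sub (hc2.fun_mul hd2)).fun_mul hu2),
    pd_add (((ha0.fun_mul hb0).fun_sub (hc0.fun_mul hd0)).fun_mul hu0)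
      (((ha1.fun_mul hb1).fun_sub (hc1.fun_mul hd1)).fun_mul hu1),
    pd_quad ha0 hb0 hc0 hd0 hu0, pd_quad ha1 hb1 hc1 hd1 hu1, pd_quad ha2 hb2 hc2 hd2 hu2]

lemma div_piola (hΩ : IsOpen Ω) (hΦ : ContDiffOn ℝ 2 Φ Ω) (hx : x ∈ Ω)
    (F : V3 → V3) (hF : DifferentiableAt ℝ F (Φ x)) :
    div3 (fun z => (Jmat Φ z).adjugate.mulVec (F (Φ z))) x
      = (Jmat Φ x).det * div3 F (Φ x) := by
  have hΦdx : DifferentiableAt ℝ Φ x := diffOn_of_C2 hΦ hΩ hx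
  have hJd : ∀ k i, DifferentiableAt ℝ (fun z => Jmat Φ z k i) x :=
    fun k i => (Jmat_entry hΩ hΦ hx k i).1
  have hJpd : ∀ k i j, pd j (fun z => Jmat Φ z k i) x
      = fderiv ℝ (fderiv ℝ Φ) x (Pi.single j 1) (Pi.single i 1) k :=
    fun k i => (Jmat_entry hΩ hΦ hx k i).2
  have hFk : ∀ k, DifferentiableAt ℝ (fun w => F w k) (Φ x) := fun k => by
    exact (ContinuousLinearMap.proj k).differentiableAt.comp (Φ x) hF
  have hcd : ∀ k, DifferentiableAt ℝ (fun z => F (Φ z) k) x :=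
    fun k => comp_diff (hFk k) hΦdx
  have hcpd : ∀ k j, pd j (fun z => F (Φ z) k) x
      = ∑ l, pd l (fun w => F w k) (Φ x) * Jmat Φ x l j :=
    fun k j => pd_comp (hFk k) hΦdx j
  have hW0 : (fun z => (Jmat Φ z).adjugate.mulVec (F (Φ z)) 0) =
      fun z => (Jmat Φ z 1 1 * Jmat Φ z 2 2 - Jmat Φ z 1 2 * Jmat Φ z 2 1) * F (Φ z) 0 + (Jmat Φ z 2 1 * Jmat Φ z 0 2 - Jmat Φ z 2 2 * Jmat Φ z 0 1) * F (Φ z) 1 + (Jmat Φ z 0 1 * Jmat Φ z 1 2 - Jmat Φ z 0 2 * Jmat Φ z 1 1) * F (Φ z) 2 := by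
    funext z
    simp only [Matrix.adjugate_fin_three, Matrix.mulVec, dotProduct,
      Fin.sum_univ_three, Matrix.cons_val', Matrix.cons_val_zero, Matrix.cons_val_one,
      Matrix.head_cons, Matrix.empty_val', Matrix.cons_val_fin_one, Matrix.cons_val_two,
      Matrix.tail_cons, Matrix.head_fin_const, Matrix.of_apply]
    ring
  have hptB0 := pd_triquad (hJd 1 1) (hJd 2 2) (hJd 1 2) (hJd 2 1) (hcd 0) (hJd 2 1) (hJd 0 2) (hJd 2 2) (hJd 0 1) (hcd 1) (hJd 0 1) (hJd 1 2) (hJd 0 2) (hJd 1 1) (hcd 2) (0 : Fin 3)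
  have hW1 : (fun z => (Jmat Φ z).adjugate.mulVec (F (Φ z)) 1) =
      fun z => (Jmat Φ z 1 2 * Jmat Φ z 2 0 - Jmat Φ z 1 0 * Jmat Φ z 2 2) * F (Φ z) 0 + (Jmat Φ z 2 2 * Jmat Φ z 0 0 - Jmat Φ z 2 0 * Jmat Φ z 0 2) * F (Φ z) 1 + (Jmat Φ z 0 2 * Jmat Φ z 1 0 - Jmat Φ z 0 0 * Jmat Φ z 1 2) * F (Φ z) 2 := by
    funext z
    simp only [Matrix.adjugate_fin_three, Matrix.mulVec, dotProduct,
      Fin.sum_univ_three, Matrix.cons_val', Matrix.cons_val_zero, Matrix.cons_val_one,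
      Matrix.head_cons, Matrix.empty_val', Matrix.cons_val_fin_one, Matrix.cons_val_two,
      Matrix.tail_cons, Matrix.head_fin_const, Matrix.of_apply]
    ring
  have hptB1 := pd_triquad (hJd 1 2) (hJd 2 0) (hJd 1 0) (hJd 2 2) (hcd 0) (hJd 2 2) (hJd 0 0) (hJd 2 0) (hJd 0 2) (hcd 1) (hJd 0 2) (hJd 1 0) (hJd 0 0) (hJd 1 2) (hcd 2) (1 : Fin 3)
  have hW2 : (fun z => (Jmat Φ z).adjugate.mulVec (F (Φ z)) 2) =
      fun z => (Jmat Φ z 1 0 * Jmat Φ z 2 1 - Jmat Φ z 1 1 * Jmat Φ z 2 0) * F (Φ z) 0 + (Jmat Φ z 2 0 * Jmat Φ z 0 1 - Jmat Φ z 2 1 * Jmat Φ z 0 0) * F (Φ z) 1 + (Jmat Φ z 0 0 * Jmat Φ z 1 1 - Jmat Φ z 0 1 * Jmat Φ z 1 0) * F (Φ z) 2 := by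
    funext z
    simp only [Matrix.adjugate_fin_three, Matrix.mulVec, dotProduct,
      Fin.sum_univ_three, Matrix.cons_val', Matrix.cons_val_zero, Matrix.cons_val_one,
      Matrix.head_cons, Matrix.empty_val', Matrix.cons_val_fin_one, Matrix.cons_val_two,
      Matrix.tail_cons, Matrix.head_fin_const, Matrix.of_apply]
    ring
  have hptB2 := pd_triquad (hJd 1 0) (hJd 2 1) (hJd 1 1) (hJd 2 0) (hcd 0) (hJd 2 0) (hJd 0 1) (hJd 2 1) (hJd 0 0) (hcd 1) (hJd 0 0) (hJd 1 1) (hJd 0 1) (hJd 1 0) (hcd 2) (2 : Fin 3)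
  have hs := snd_symm hΩ hΦ hx
  rw [div3]
  simp only [Fin.sum_univ_three]
  rw [hW0, hW1, hW2, hptB0, hptB1, hptB2]
  simp only [hJpd, hcpd, Fin.sum_univ_three]
  simp only [hs (Pi.single 1 1) (Pi.single 0 1), hs (Pi.single 2 1) (Pi.single 0 1),
    hs (Pi.single 2 1) (Pi.single 1 1)]
  simp [Matrix.det_fin_three, div3, Fin.sum_univ_three]
  ring

lemma left_inverse_matrix {Ψ : V3 → V3} {z : V3} {Ω' : Set V3}
    (hΩ : IsOpen Ω) (hΩ' : IsOpen Ω') (hΦ : ContDiffOn ℝ 2 Φ Ω)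
    (hΨ : ContDiffOn ℝ 2 Ψ Ω') (hz : z ∈ Ω) (hzz : Φ z ∈ Ω')
    (hli : ∀ u ∈ Ω, Ψ (Φ u) = u) :
    IsUnit (Jmat Φ z).det := by
  have hΦd : DifferentiableAt ℝ Φ z := diffOn_of_C2 hΦ hΩ hz
  have hΨd : DifferentiableAt ℝ Ψ (Φ z) := diffOn_of_C2 hΨ hΩ' hzz
  have h1 : HasFDerivAt (fun u => Ψ (Φ u))
      ((fderiv ℝ Ψ (Φ z)).comp (fderiv ℝ Φ z)) z := by
    exact hΨd.hasFDerivAt.comp z hΦd.hasFDerivAt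
  have h2 : (fun u => Ψ (Φ u)) =ᶠ[nhds z] fun u => u := by
    filter_upwards [hΩ.mem_nhds hz] with u hu
    exact hli u hu
  have h3 : (fderiv ℝ Ψ (Φ z)).comp (fderiv ℝ Φ z) = ContinuousLinearMap.id ℝ V3 := by
    rw [← h1.fderiv, h2.fderiv_eq]
    exact fderiv_id'
  set M : Matrix (Fin 3) (Fin 3) ℝ :=
    Matrix.of fun i j => fderiv ℝ Ψ (Φ z) (Pi.single j 1) i with hM
  have hMJ : M * Jmat Φ z = 1 := by
    ext i j
    have : fderiv ℝ Ψ (Φ z) (fderiv ℝ Φ z (Pi.single j 1)) i = (Pi.single j 1 : V3) i := by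
      have := congrArg (fun (L : V3 →L[ℝ] V3) => L (Pi.single j 1) i) h3
      simpa using this
    rw [Matrix.mul_apply]
    calc ∑ l, M i l * Jmat Φ z l j
        = ∑ l, fderiv ℝ Φ z (Pi.single j 1) l • fderiv ℝ Ψ (Φ z) (Pi.single l 1) i := by
          refine Finset.sum_congr rfl fun l _ => ?_
          rw [hM, Jmat_eq_fderiv hΦd]
          simp [smul_eq_mul]
          ring
      _ = (∑ l, fderiv ℝ Φ z (Pi.single j 1) l • fderiv ℝ Ψ (Φ z) (Pi.single l 1)) i := by
          simp [Finset.sum_apply]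
      _ = fderiv ℝ Ψ (Φ z) (fderiv ℝ Φ z (Pi.single j 1)) i := by
          rw [← clm_eval]
      _ = (Pi.single j 1 : V3) i := this
      _ = (1 : Matrix (Fin 3) (Fin 3) ℝ) i j := by
          simp [Matrix.one_apply, Pi.single_apply]
  exact Matrix.isUnit_det_of_left_inverse hMJ

lemma det_smul_inv_eq_adj {A : Matrix (Fin 3) (Fin 3) ℝ} (h : IsUnit A.det) :
    A.det • A⁻¹ = A.adjugate := by
  calc A.det • A⁻¹ = A⁻¹ * (A.det • 1) := by
        rw [Matrix.mul_smul, Matrix.mul_one]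
    _ = A⁻¹ * (A * A.adjugate) := by rw [Matrix.mul_adjugate]
    _ = (A⁻¹ * A) * A.adjugate := by rw [Matrix.mul_assoc]
    _ = A.adjugate := by rw [Matrix.nonsing_inv_mul A h, Matrix.one_mul]

end Helpers

/-- Covariant (1-form) pullback of a time-dependent field: `F'(x,t) = J(x)ᵀ F(Φ(x),t)`. -/
noncomputable def pullCov (Φ : (Fin 3 → ℝ) → (Fin 3 → ℝ))
    (F : (Fin 3 → ℝ) → ℝ → (Fin 3 → ℝ)) (x : Fin 3 → ℝ) (t : ℝ) : Fin 3 → ℝ :=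
  (Jmat Φ x).transpose.mulVec (F (Φ x) t)

/-- Piola (2-form) transform of a time-dependent field:
`F'(x,t) = det J(x) · J(x)⁻¹ F(Φ(x),t)`. -/
noncomputable def piola (Φ : (Fin 3 → ℝ) → (Fin 3 → ℝ))
    (F : (Fin 3 → ℝ) → ℝ → (Fin 3 → ℝ)) (x : Fin 3 → ℝ) (t : ℝ) : Fin 3 → ℝ :=
  (Jmat Φ x).det • (Jmat Φ x)⁻¹.mulVec (F (Φ x) t)

/-- Transformation of a material parameter matrix:
`m'(x) = det J(x) · J(x)⁻¹ m(Φ(x)) (J(x)⁻¹)ᵀ`. -/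
noncomputable def matTrans (Φ : (Fin 3 → ℝ) → (Fin 3 → ℝ))
    (m : (Fin 3 → ℝ) → Matrix (Fin 3) (Fin 3) ℝ) (x : Fin 3 → ℝ) :
    Matrix (Fin 3) (Fin 3) ℝ :=
  (Jmat Φ x).det • ((Jmat Φ x)⁻¹ * m (Φ x) * ((Jmat Φ x)⁻¹).transpose)

/-- **Invariance of Maxwell's equations under diffeomorphisms of `ℝ³`** (the
transformations characterizing the non-uniqueness of the anisotropic inverse boundary
value problem). If `Φ : Ω → Ω̃` is a `C²` diffeomorphism, `(E,H,D,B)` are `C¹` fields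
solving Maxwell's equations on `Ω̃ × ℝ` with constitutive relations `D = εE`, `B = μH`,
then the transformed fields `E' = JᵀE∘Φ`, `H' = JᵀH∘Φ`, `D' = det J · J⁻¹ D∘Φ`,
`B' = det J · J⁻¹ B∘Φ` solve Maxwell's equations on `Ω × ℝ` with the transformed
material parameters `ε' = det J · J⁻¹ ε∘Φ J⁻ᵀ`, `μ' = det J · J⁻¹ μ∘Φ J⁻ᵀ`. -/
theorem stmt_0
    (Ω Ω' : Set (Fin 3 → ℝ)) (hΩ : IsOpen Ω) (hΩ' : IsOpen Ω')
    (Φ Ψ : (Fin 3 → ℝ) → (Fin 3 → ℝ))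
    -- Φ is a C² diffeomorphism of Ω onto Ω', with C² inverse Ψ
    (hΦ : ContDiffOn ℝ 2 Φ Ω) (hΨ : ContDiffOn ℝ 2 Ψ Ω')
    (hΦbij : Set.BijOn Φ Ω Ω') (hinv : Set.InvOn Ψ Φ Ω Ω')
    (ε μ : (Fin 3 → ℝ) → Matrix (Fin 3) (Fin 3) ℝ)
    (E H D B : (Fin 3 → ℝ) → ℝ → (Fin 3 → ℝ))
    -- the fields are C¹ on Ω̃ × ℝ
    (hE : ContDiffOn ℝ 1 (fun p : (Fin 3 → ℝ) × ℝ => E p.1 p.2) (Ω' ×ˢ Set.univ))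
    (hH : ContDiffOn ℝ 1 (fun p : (Fin 3 → ℝ) × ℝ => H p.1 p.2) (Ω' ×ˢ Set.univ))
    (hD : ContDiffOn ℝ 1 (fun p : (Fin 3 → ℝ) × ℝ => D p.1 p.2) (Ω' ×ˢ Set.univ))
    (hB : ContDiffOn ℝ 1 (fun p : (Fin 3 → ℝ) × ℝ => B p.1 p.2) (Ω' ×ˢ Set.univ))
    -- Maxwell's equations on Ω̃ × ℝ
    (hFaraday : ∀ y ∈ Ω', ∀ t : ℝ,
      curl3 (fun z => E z t) y = fun i => -(deriv (fun s => B y s i) t))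
    (hAmpere : ∀ y ∈ Ω', ∀ t : ℝ,
      curl3 (fun z => H z t) y = fun i => deriv (fun s => D y s i) t)
    (hdivB : ∀ y ∈ Ω', ∀ t : ℝ, div3 (fun z => B z t) y = 0)
    (hdivD : ∀ y ∈ Ω', ∀ t : ℝ, div3 (fun z => D z t) y = 0)
    -- constitutive relations
    (hconstD : ∀ y ∈ Ω', ∀ t : ℝ, D y t = (ε y).mulVec (E y t))
    (hconstB : ∀ y ∈ Ω', ∀ t : ℝ, B y t = (μ y).mulVec (H y t)) :
    ∀ x ∈ Ω, ∀ t : ℝ,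
      (curl3 (fun z => pullCov Φ E z t) x =
          fun i => -(deriv (fun s => piola Φ B x s i) t)) ∧
      (curl3 (fun z => pullCov Φ H z t) x =
          fun i => deriv (fun s => piola Φ D x s i) t) ∧
      div3 (fun z => piola Φ B z t) x = 0 ∧
      div3 (fun z => piola Φ D z t) x = 0 ∧
      piola Φ D x t = (matTrans Φ ε x).mulVec (pullCov Φ E x t) ∧
      piola Φ B x t = (matTrans Φ μ x).mulVec (pullCov Φ H x t) := by
  intro x hx t
  have hy : Φ x ∈ Ω' := hΦbij.mapsTo hx
  have hdet : ∀ z ∈ Ω, IsUnit (Jmat Φ z).det := fun z hz =>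
    left_inverse_matrix hΩ hΩ' hΦ hΨ hz (hΦbij.mapsTo hz) (fun u hu => hinv.1 hu)
  have hpiola : ∀ (G : (Fin 3 → ℝ) → ℝ → (Fin 3 → ℝ)) z, z ∈ Ω → ∀ s : ℝ,
      piola Φ G z s = (Jmat Φ z).adjugate.mulVec (G (Φ z) s) := by
    intro G z hz s
    rw [piola, ← det_smul_inv_eq_adj (hdet z hz), Matrix.smul_mulVec]
  have hprod : IsOpen (Ω' ×ˢ (Set.univ : Set ℝ)) := hΩ'.prod isOpen_univ
  have hmem : ((Φ x, t) : (Fin 3 → ℝ) × ℝ) ∈ Ω' ×ˢ (Set.univ : Set ℝ) := ⟨hy, trivial⟩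
  have hslice : ∀ (G : (Fin 3 → ℝ) → ℝ → (Fin 3 → ℝ)),
      ContDiffOn ℝ 1 (fun p : (Fin 3 → ℝ) × ℝ => G p.1 p.2) (Ω' ×ˢ Set.univ) →
      DifferentiableAt ℝ (fun w => G w t) (Φ x) := by
    intro G hG
    have h1 : DifferentiableAt ℝ (fun p : (Fin 3 → ℝ) × ℝ => G p.1 p.2) (Φ x, t) :=
      (hG.differentiableOn one_ne_zero).differentiableAt (hprod.mem_nhds hmem)
    have h2 : DifferentiableAt ℝ (fun w : Fin 3 → ℝ => ((w, t) : (Fin 3 → ℝ) × ℝ)) (Φ x) :=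
      differentiableAt_id.prodMk (differentiableAt_const t)
    exact h1.comp (Φ x) h2
  have htime : ∀ (G : (Fin 3 → ℝ) → ℝ → (Fin 3 → ℝ)),
      ContDiffOn ℝ 1 (fun p : (Fin 3 → ℝ) × ℝ => G p.1 p.2) (Ω' ×ˢ Set.univ) →
      ∀ n : Fin 3, DifferentiableAt ℝ (fun s => G (Φ x) s n) t := by
    intro G hG n
    have h1 : DifferentiableAt ℝ (fun p : (Fin 3 → ℝ) × ℝ => G p.1 p.2) (Φ x, t) :=
      (hG.differentiableOn one_ne_zero).differentiableAt (hprod.mem_nhds hmem)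
    have h2 : DifferentiableAt ℝ (fun s : ℝ => ((Φ x, s) : (Fin 3 → ℝ) × ℝ)) t :=
      (differentiableAt_const (Φ x)).prodMk differentiableAt_id
    have h3 : DifferentiableAt ℝ (fun s => G (Φ x) s) t := h1.comp t h2
    exact (ContinuousLinearMap.proj n).differentiableAt.comp t h3
  have hderivP : ∀ (G : (Fin 3 → ℝ) → ℝ → (Fin 3 → ℝ)),
      (∀ n : Fin 3, DifferentiableAt ℝ (fun s => G (Φ x) s n) t) → ∀ m : Fin 3,
      deriv (fun s => piola Φ G x s m) t
        = (Jmat Φ x).adjugate m 0 * deriv (fun s => G (Φ x) s 0) t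
          + (Jmat Φ x).adjugate m 1 * deriv (fun s => G (Φ x) s 1) t
          + (Jmat Φ x).adjugate m 2 * deriv (fun s => G (Φ x) s 2) t := by
    intro G hGt m
    have heq : (fun s => piola Φ G x s m) = fun s =>
        (Jmat Φ x).adjugate m 0 * G (Φ x) s 0 + (Jmat Φ x).adjugate m 1 * G (Φ x) s 1
          + (Jmat Φ x).adjugate m 2 * G (Φ x) s 2 := by
      funext s
      rw [hpiola G x hx s]
      simp only [Matrix.mulVec, dotProduct, Fin.sum_univ_three]
    rw [heq, deriv_fun_add (((hGt 0).const_mul _).fun_add ((hGt 1).const_mul _)) ((hGt 2).const_mul _),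
      deriv_fun_add ((hGt 0).const_mul _) ((hGt 1).const_mul _),
      deriv_const_mul _ (hGt 0), deriv_const_mul _ (hGt 1), deriv_const_mul _ (hGt 2)]
  have hdiv : ∀ (G : (Fin 3 → ℝ) → ℝ → (Fin 3 → ℝ)),
      ContDiffOn ℝ 1 (fun p : (Fin 3 → ℝ) × ℝ => G p.1 p.2) (Ω' ×ˢ Set.univ) →
      div3 (fun z => piola Φ G z t) x = (Jmat Φ x).det * div3 (fun w => G w t) (Φ x) := by
    intro G hG
    have hc : div3 (fun z => piola Φ G z t) x
        = div3 (fun z => (Jmat Φ z).adjugate.mulVec ((fun w => G w t) (Φ z))) x := by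
      unfold div3
      refine Finset.sum_congr rfl fun i _ => pd_congr ?_ i
      filter_upwards [hΩ.mem_nhds hx] with z hz
      exact congrFun (hpiola G z hz t) i
    rw [hc, div_piola hΩ hΦ hx (fun w => G w t) (hslice G hG)]
  have hJK : Jmat Φ x * (Jmat Φ x)⁻¹ = 1 := Matrix.mul_nonsing_inv _ (hdet x hx)
  have hconst : ∀ (m0 : (Fin 3 → ℝ) → Matrix (Fin 3) (Fin 3) ℝ)
      (G F0 : (Fin 3 → ℝ) → ℝ → (Fin 3 → ℝ)),
      F0 (Φ x) t = (m0 (Φ x)).mulVec (G (Φ x) t) →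
      piola Φ F0 x t = (matTrans Φ m0 x).mulVec (pullCov Φ G x t) := by
    intro m0 G F0 hc
    rw [piola, matTrans, pullCov, hc, Matrix.smul_mulVec]
    congr 1
    rw [Matrix.mulVec_mulVec, Matrix.mulVec_mulVec,
      show (Jmat Φ x)⁻¹ * m0 (Φ x) * ((Jmat Φ x)⁻¹).transpose * (Jmat Φ x).transpose
          = (Jmat Φ x)⁻¹ * m0 (Φ x) by
        rw [Matrix.mul_assoc ((Jmat Φ x)⁻¹ * m0 (Φ x)), ← Matrix.transpose_mul, hJK,
          Matrix.transpose_one, Matrix.mul_one]]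
  refine ⟨?_, ?_, ?_, ?_, hconst ε E D (hconstD (Φ x) hy t), hconst μ H B (hconstB (Φ x) hy t)⟩
  · have h1 : curl3 (fun z => pullCov Φ E z t) x
        = (Jmat Φ x).adjugate.mulVec (curl3 (fun w => E w t) (Φ x)) :=
      curl_pullback hΩ hΦ hx (fun w => E w t) (hslice E hE)
    rw [h1, hFaraday (Φ x) hy t]
    funext i
    simp only [Matrix.mulVec, dotProduct, Fin.sum_univ_three]
    rw [hderivP B (htime B hB) i]
    ring
  · have h1 : curl3 (fun z => pullCov Φ H z t) x
        = (Jmat Φ x).adjugate.mulVec (curl3 (fun w => H w t) (Φ x)) :=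
      curl_pullback hΩ hΦ hx (fun w => H w t) (hslice H hH)
    rw [h1, hAmpere (Φ x) hy t]
    funext i
    simp only [Matrix.mulVec, dotProduct, Fin.sum_univ_three]
    rw [hderivP D (htime D hD) i]
  · rw [hdiv B hB, hdivB (Φ x) hy t, mul_zero]
  · rw [hdiv D hD, hdivD (Φ x) hy t, mul_zero]
end

section
/- Let (M,d) be a compact metric space, A ⊆ M a nonempty closed subset, and h : A → ℝ a continuous function. Then there exists a point x ∈ M such that h(z) = d(x,z) for all z ∈ A if and only if for every ε > 0 and every finite collection of points z₁, …, z_J ∈ A there exists x ∈ M such that |h(z_j) − d(x,z_j)| < ε for all j = 1, …, J. -/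
/-!
The condition is the finite intersection property of the closed sets
`{x | |h z - d(x, z)| ≤ 1/(n+1)}`, indexed by `z ∈ A` and `n ∈ ℕ`; by compactness of `M`
their intersection is nonempty, and any point in it realises `h` exactly.
-/

open Set

theorem exists_forall_eq_of_forall_finset_exists_dist_lt {X Y ι : Type*}
    [TopologicalSpace X] [CompactSpace X] [MetricSpace Y] {f : ι → X → Y} {y : ι → Y}
    (hf : ∀ i, Continuous (f i))
    (happrox : ∀ ε > (0 : ℝ), ∀ u : Finset ι, ∃ x, ∀ i ∈ u, dist (f i x) (y i) < ε) :
    ∃ x, ∀ i, f i x = y i := by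
  classical
  let t : ι × ℕ → Set X := fun p => {x | dist (f p.1 x) (y p.1) ≤ 1 / (p.2 + 1)}
  have ht_closed : ∀ p, IsClosed (t p) := fun p =>
    isClosed_le ((hf p.1).dist continuous_const) continuous_const
  have ht_finite : ∀ u : Finset (ι × ℕ), (univ ∩ ⋂ p ∈ u, t p).Nonempty := by
    intro u
    obtain ⟨x, hx⟩ := happrox (1 / (u.sup Prod.snd + 1)) (by positivity) (u.image Prod.fst)
    refine ⟨x, mem_univ x, mem_iInter₂.mpr fun p hp => ?_⟩
    have hn : (p.2 : ℝ) ≤ u.sup Prod.snd := by exact_mod_cast Finset.le_sup (f := Prod.snd) hp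
    calc dist (f p.1 x) (y p.1) ≤ 1 / (u.sup Prod.snd + 1) :=
          (hx p.1 (Finset.mem_image_of_mem _ hp)).le
      _ ≤ 1 / (p.2 + 1) := by gcongr
  obtain ⟨x, -, hx⟩ := isCompact_univ.inter_iInter_nonempty t ht_closed ht_finite
  refine ⟨x, fun i => eq_of_forall_dist_le fun ε hε => ?_⟩
  obtain ⟨n, hn⟩ := exists_nat_one_div_lt hε
  exact (mem_iInter.mp hx (i, n)).trans hn.le

theorem stmt_2_general
    {M : Type*} [MetricSpace M] [CompactSpace M]
    (A : Set M)
    (h : M → ℝ) :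
    (∃ x : M, ∀ z ∈ A, h z = dist x z) ↔
      (∀ ε > (0 : ℝ), ∀ (J : ℕ) (z : Fin J → M), (∀ j, z j ∈ A) →
        ∃ x : M, ∀ j, |h (z j) - dist x (z j)| < ε) := by
  constructor
  · rintro ⟨x, hx⟩ ε hε J z hz
    exact ⟨x, fun j => by simpa [hx _ (hz j)] using hε⟩
  · intro happrox
    suffices ∃ x : M, ∀ z : A, dist x z = h z by
      obtain ⟨x, hx⟩ := this
      exact ⟨x, fun z hz => (hx ⟨z, hz⟩).symm⟩
    refine exists_forall_eq_of_forall_finset_exists_dist_lt (f := fun (z : A) x => dist x (z : M))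
      (fun z => continuous_id.dist continuous_const) fun ε hε u => ?_
    obtain ⟨x, hx⟩ := happrox ε hε u.card (fun j => u.equivFin.symm j)
      fun j => (u.equivFin.symm j).1.2
    exact ⟨x, fun z hz => by simpa [Real.dist_eq, abs_sub_comm] using hx (u.equivFin ⟨z, hz⟩)⟩

/-- **Finite-sampling criterion for boundary distance functions.** Let `(M,d)` be a
compact metric space, `A ⊆ M` a nonempty closed subset and `h` continuous on `A`.
Then `h` is of the form `h(z) = d(x,z)` on `A` for some point `x ∈ M` if and only if
for every `ε > 0` and every finite collection of points `z₁, …, z_J ∈ A` there is an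
`x ∈ M` with `|h(z_j) − d(x, z_j)| < ε` for all `j`. -/
theorem stmt_2
    {M : Type*} [MetricSpace M] [CompactSpace M]
    (A : Set M) (hA_closed : IsClosed A) (hA_ne : A.Nonempty)
    (h : M → ℝ) (hh : ContinuousOn h A) :
    (∃ x : M, ∀ z ∈ A, h z = dist x z) ↔
      (∀ ε > (0 : ℝ), ∀ (J : ℕ) (z : Fin J → M), (∀ j, z j ∈ A) →
        ∃ x : M, ∀ j, |h (z j) - dist x (z j)| < ε) :=
  stmt_2_general A h
end
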